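/- arXiv:math/9811182 — 4 statements merged into one kernel-verified Lean document; each statement's English description precedes it below -/
import Mathlib

section
/- Let ‖·‖ be a seminorm on ℝ² that restricts to an integer-valued function on the lattice ℤ² and is nonzero and indefinite (i.e., its kernel is nonzero but ‖·‖ is not identically zero). Then there is a unique pair ±α of primitive elements of ℤ² with ‖α‖ = 0, and for any β ∈ ℤ², ‖β‖ = 0 if and only if β is an integer multiple of α. -/
/-!
A seminorm vanishing on `v ≠ 0` is invariant under translation by `ℝ v`, hence equal to `|ℓ|`
for a linear form `ℓ` with kernel `ℝ v`. Evaluating at the basis vectors shows that integrality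
on the lattice forces the coefficients `a, b` of `ℓ` to be integers, not both zero since the
seminorm is nonzero. The lattice zeros are then the integer solutions of `a x + b y = 0`, which
after dividing by `g = gcd a b` are the integer multiples of the primitive vector `(b/g, -a/g)`.
-/

/-- The inclusion of the lattice `ℤ × ℤ` in `ℝ × ℝ`. -/
def latticeEmb (β : ℤ × ℤ) : ℝ × ℝ := ((β.1 : ℝ), (β.2 : ℝ))

/-- An element `α` of `ℤ × ℤ` is primitive if `α = n • β` forces `n = ±1`. -/
def Primitive (α : ℤ × ℤ) : Prop :=
  ∀ (n : ℤ) (β : ℤ × ℤ), α = n • β → n = 1 ∨ n = -1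

theorem Seminorm.map_add_eq_left_of_map_eq_zero {𝕜 E : Type*} [SeminormedRing 𝕜] [AddGroup E]
    [SMul 𝕜 E] (p : Seminorm 𝕜 E) {x y : E} (hy : p y = 0) : p (x + y) = p x :=
  le_antisymm (by simpa [hy] using map_add_le_add p x y)
    (by simpa [hy] using map_sub_le_add p (x + y) y)

theorem Seminorm.exists_eq_abs_linear_of_map_eq_zero (p : Seminorm ℝ (ℝ × ℝ)) {v : ℝ × ℝ}
    (hv : v ≠ 0) (hpv : p v = 0) : ∃ a b : ℝ, ∀ x : ℝ × ℝ, p x = |a * x.1 + b * x.2| := by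
  set d := v.1 ^ 2 + v.2 ^ 2
  have hd : d ≠ 0 := by
    have : v.1 ≠ 0 ∨ v.2 ≠ 0 := by
      contrapose! hv
      exact Prod.ext hv.1 hv.2
    rcases this with h | h <;> positivity
  set w : ℝ × ℝ := (v.2, -v.1)
  refine ⟨v.2 * p w / d, -v.1 * p w / d, fun x => ?_⟩
  set t := (x.1 * v.2 - x.2 * v.1) / d
  set s := (x.1 * v.1 + x.2 * v.2) / d
  have hdecomp : t • w + s • v = x := by
    ext <;> simp only [Prod.fst_add, Prod.snd_add, Prod.smul_fst, Prod.smul_snd, smul_eq_mul,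
      t, s, w] <;> field_simp <;> ring
  calc p x = p (t • w + s • v) := by rw [hdecomp]
    _ = |t| * p w := by
      rw [p.map_add_eq_left_of_map_eq_zero (by rw [map_smul_eq_mul, hpv, mul_zero]),
        map_smul_eq_mul, Real.norm_eq_abs]
    _ = |t * p w| := by rw [abs_mul, abs_of_nonneg (apply_nonneg p w)]
    _ = |v.2 * p w / d * x.1 + -v.1 * p w / d * x.2| := by
      congr 1
      simp only [t]
      ring

theorem exists_int_eq_of_abs_eq_int {r : ℝ} {m : ℤ} (h : |r| = m) : ∃ n : ℤ, r = n := by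
  rcases abs_choice r with hr | hr
  · exact ⟨m, by rw [← h, hr]⟩
  · exact ⟨-m, by push_cast; linarith⟩

theorem IsCoprime.primitive {a b : ℤ} (h : IsCoprime a b) : Primitive (a, b) := by
  intro n β hβ
  simp only [Prod.ext_iff, Prod.smul_fst, Prod.smul_snd, smul_eq_mul] at hβ
  exact Int.isUnit_iff.mp (h.isUnit_of_dvd' ⟨β.1, hβ.1⟩ ⟨β.2, hβ.2⟩)

theorem IsCoprime.mul_add_mul_eq_zero_iff {a b : ℤ} (h : IsCoprime a b) (β : ℤ × ℤ) :
    a * β.1 + b * β.2 = 0 ↔ ∃ m : ℤ, β = m • (b, -a) := by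
  obtain ⟨u, v, huv⟩ := h
  constructor
  · intro hβ
    -- `β = (u a + v b) • β`, and `a β.1 = -b β.2`
    refine ⟨v * β.1 - u * β.2, Prod.ext ?_ ?_⟩ <;>
      simp only [Prod.smul_fst, Prod.smul_snd, smul_eq_mul]
    · linear_combination (-β.1) * huv + u * hβ
    · linear_combination (-β.2) * huv + v * hβ
  · rintro ⟨m, rfl⟩
    simp only [Prod.smul_fst, Prod.smul_snd, smul_eq_mul]
    ring

theorem exists_primitive_mul_add_mul_eq_zero_iff {a b : ℤ} (hab : (a, b) ≠ 0) :
    ∃ α : ℤ × ℤ, Primitive α ∧ ∀ β : ℤ × ℤ, a * β.1 + b * β.2 = 0 ↔ ∃ m : ℤ, β = m • α := by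
  have hgcd : 0 < Int.gcd a b := Int.gcd_pos_iff.mpr (by
    contrapose! hab
    exact Prod.mk_eq_zero.mpr hab)
  obtain ⟨g, a, b, hg, hcop, rfl, rfl⟩ := Int.exists_gcd_one' hgcd
  have hcop : IsCoprime a b := Int.isCoprime_iff_gcd_eq_one.mpr hcop
  refine ⟨(b, -a), hcop.symm.neg_right.primitive, fun β => ?_⟩
  have hg : (g : ℤ) ≠ 0 := by exact_mod_cast hg.ne'
  rw [← hcop.mul_add_mul_eq_zero_iff β,
    show a * g * β.1 + b * g * β.2 = g * (a * β.1 + b * β.2) by ring, mul_eq_zero,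
    or_iff_right hg]

theorem Primitive.eq_or_eq_neg_of_eq_smul {α β : ℤ × ℤ} {m : ℤ} (h : Primitive α)
    (hm : α = m • β) : α = β ∨ α = -β := by
  rcases h m β hm with rfl | rfl
  · exact Or.inl (by rw [hm, one_smul])
  · exact Or.inr (by rw [hm, neg_one_smul])

/-- A nonzero indefinite seminorm on `ℝ²` which is integer-valued on the lattice `ℤ²`
vanishes on a unique pair `±α` of primitive lattice elements, and its zero set in the
lattice is exactly the set of integer multiples of `α`. -/
theorem stmt_2 (p : Seminorm ℝ (ℝ × ℝ))
    (hint : ∀ β : ℤ × ℤ, ∃ m : ℤ, p (latticeEmb β) = m)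
    (hnz : ∃ v : ℝ × ℝ, p v ≠ 0)
    (hindef : ∃ v : ℝ × ℝ, v ≠ 0 ∧ p v = 0) :
    ∃ α : ℤ × ℤ, Primitive α ∧ p (latticeEmb α) = 0 ∧
      (∀ α' : ℤ × ℤ, Primitive α' → p (latticeEmb α') = 0 → α' = α ∨ α' = -α) ∧
      (∀ β : ℤ × ℤ, p (latticeEmb β) = 0 ↔ ∃ m : ℤ, β = m • α) := by
  obtain ⟨v, hv, hpv⟩ := hindef
  obtain ⟨a, b, hp⟩ := p.exists_eq_abs_linear_of_map_eq_zero hv hpv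
  obtain ⟨a, rfl⟩ : ∃ n : ℤ, a = n := by
    obtain ⟨m, hm⟩ := hint (1, 0)
    exact exists_int_eq_of_abs_eq_int (by simpa [hp, latticeEmb] using hm)
  obtain ⟨b, rfl⟩ : ∃ n : ℤ, b = n := by
    obtain ⟨m, hm⟩ := hint (0, 1)
    exact exists_int_eq_of_abs_eq_int (by simpa [hp, latticeEmb] using hm)
  have hzero (β : ℤ × ℤ) : p (latticeEmb β) = 0 ↔ a * β.1 + b * β.2 = 0 := by
    simp only [hp, latticeEmb, abs_eq_zero]
    norm_cast
  have hab : (a, b) ≠ 0 := by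
    obtain ⟨w, hw⟩ := hnz
    rw [Ne, Prod.mk_eq_zero]
    rintro ⟨rfl, rfl⟩
    simp [hp] at hw
  obtain ⟨α, hα, hker⟩ := exists_primitive_mul_add_mul_eq_zero_iff hab
  refine ⟨α, hα, (hzero α).2 ((hker α).2 ⟨1, (one_smul ℤ α).symm⟩), fun α' hα' h0 => ?_,
    fun β => (hzero β).trans (hker β)⟩
  obtain ⟨m, hm⟩ := (hker α').1 ((hzero α').1 h0)
  exact hα'.eq_or_eq_neg_of_eq_smul hm
end

section
/- Let ‖·‖ be a nonzero indefinite seminorm on ℝ² vanishing exactly on the line spanned by a primitive lattice element α ∈ ℤ², and suppose ‖·‖ takes integer values on ℤ². Let s = min{‖β‖ : β ∈ ℤ², ‖β‖ ≠ 0}. Then for every β ∈ ℤ², ‖β‖ = |β · α| · s, where β · α denotes the standard symplectic pairing on ℤ². -/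
/-- The standard symplectic pairing on the lattice `ℤ × ℤ`. -/
def sympl (x y : ℤ × ℤ) : ℤ := x.1 * y.2 - x.2 * y.1

/-!
Since `α` is primitive, Bézout gives `δ ∈ ℤ²` with `δ · α = 1`, so `δ, α` is a basis of `ℤ²`
and `β = (β · α) δ + (δ · β) α`. The seminorm kills `α`, hence `‖β‖ = |β · α| ‖δ‖`, and
`‖δ‖ ≠ 0` because `δ` is not on the line `ℝα`. Every nonzero value is then an integer multiple
`≥ 1` of `‖δ‖`, so `s = ‖δ‖`.
-/

lemma latticeEmb_add (x y : ℤ × ℤ) : latticeEmb (x + y) = latticeEmb x + latticeEmb y := by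
  simp [latticeEmb]

lemma latticeEmb_smul (k : ℤ) (x : ℤ × ℤ) : latticeEmb (k • x) = (k : ℝ) • latticeEmb x := by
  simp [latticeEmb, Prod.smul_def]

lemma sympl_eq_zero_of_latticeEmb_eq_smul {β α : ℤ × ℤ} {t : ℝ}
    (h : latticeEmb β = t • latticeEmb α) : sympl β α = 0 := by
  have h₁ : (β.1 : ℝ) = t * α.1 := congrArg Prod.fst h
  have h₂ : (β.2 : ℝ) = t * α.2 := congrArg Prod.snd h
  have : (sympl β α : ℝ) = 0 := by
    push_cast [sympl]
    rw [h₁, h₂]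
    ring
  exact_mod_cast this

/-- Cramer's rule in dimension two. -/
lemma sympl_smul_eq_add (β δ α : ℤ × ℤ) :
    sympl δ α • β = sympl β α • δ + sympl δ β • α := by
  ext <;> simp only [sympl, Prod.smul_fst, Prod.smul_snd, Prod.fst_add, Prod.snd_add,
    smul_eq_mul] <;> ring

lemma Primitive.gcd_eq_one {α : ℤ × ℤ} (hα : Primitive α) : Int.gcd α.1 α.2 = 1 := by
  obtain ⟨c₁, hc₁⟩ := Int.gcd_dvd_left α.1 α.2
  obtain ⟨c₂, hc₂⟩ := Int.gcd_dvd_right α.1 α.2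
  have hα_eq : α = (Int.gcd α.1 α.2 : ℤ) • (c₁, c₂) := Prod.ext hc₁ hc₂
  rcases hα _ _ hα_eq with h | h <;> omega

lemma Primitive.exists_sympl_eq_one {α : ℤ × ℤ} (hα : Primitive α) :
    ∃ δ : ℤ × ℤ, sympl δ α = 1 := by
  obtain ⟨a, b, hab⟩ := Int.isCoprime_iff_gcd_eq_one.mpr hα.gcd_eq_one
  exact ⟨(b, -a), by simp only [sympl]; linarith⟩

namespace Seminorm

variable {𝕜 E : Type*} [SeminormedRing 𝕜] [AddCommGroup E] [Module 𝕜 E]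

lemma map_add_of_map_eq_zero (p : Seminorm 𝕜 E) (v : E) {w : E} (hw : p w = 0) :
    p (v + w) = p v := by
  have h := abs_sub_map_le_sub p (v + w) v
  rw [add_sub_cancel_left, hw] at h
  exact sub_eq_zero.mp (abs_nonpos_iff.mp h)

end Seminorm

lemma seminorm_latticeEmb_eq_abs_sympl_mul (p : Seminorm ℝ (ℝ × ℝ)) {α δ : ℤ × ℤ}
    (hpα : p (latticeEmb α) = 0) (hδα : sympl δ α = 1) (β : ℤ × ℤ) :
    p (latticeEmb β) = |(sympl β α : ℝ)| * p (latticeEmb δ) := by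
  have hβ : β = sympl β α • δ + sympl δ β • α := by
    simpa [hδα] using sympl_smul_eq_add β δ α
  have hα_part : p (latticeEmb (sympl δ β • α)) = 0 := by
    rw [latticeEmb_smul, map_smul_eq_mul, hpα, mul_zero]
  calc p (latticeEmb β)
      = p (latticeEmb (sympl β α • δ) + latticeEmb (sympl δ β • α)) := by
        rw [← latticeEmb_add, ← hβ]
    _ = p (latticeEmb (sympl β α • δ)) := p.map_add_of_map_eq_zero _ hα_part
    _ = |(sympl β α : ℝ)| * p (latticeEmb δ) := by
        rw [latticeEmb_smul, map_smul_eq_mul, Real.norm_eq_abs]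

lemma le_abs_intCast_mul {c : ℝ} (hc : 0 ≤ c) {k : ℤ} (hk : |(k : ℝ)| * c ≠ 0) :
    c ≤ |(k : ℝ)| * c := by
  have hk₁ : (1 : ℝ) ≤ |(k : ℝ)| := by
    rw [← Int.cast_abs, ← Int.cast_one, Int.cast_le]
    exact Int.one_le_abs (by rintro rfl; simp at hk)
  nlinarith

theorem stmt_3_general (p : Seminorm ℝ (ℝ × ℝ)) (α : ℤ × ℤ) (hα : Primitive α)
    (hker : ∀ v : ℝ × ℝ, p v = 0 ↔ ∃ t : ℝ, v = t • latticeEmb α)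
    (s : ℝ) (hs : IsLeast {x : ℝ | ∃ β : ℤ × ℤ, p (latticeEmb β) = x ∧ x ≠ 0} s) :
    ∀ β : ℤ × ℤ, p (latticeEmb β) = (|sympl β α| : ℝ) * s := by
  obtain ⟨δ, hδα⟩ := hα.exists_sympl_eq_one
  have hpα : p (latticeEmb α) = 0 := (hker _).mpr ⟨1, (one_smul ℝ _).symm⟩
  have hpβ := seminorm_latticeEmb_eq_abs_sympl_mul p hpα hδα
  have hpδ : p (latticeEmb δ) ≠ 0 := fun h => by
    obtain ⟨t, ht⟩ := (hker _).mp h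
    simp [sympl_eq_zero_of_latticeEmb_eq_smul ht] at hδα
  have hs_eq : s = p (latticeEmb δ) := by
    obtain ⟨⟨β₀, hβ₀, hs₀⟩, hlow⟩ := hs
    refine le_antisymm (hlow ⟨δ, rfl, hpδ⟩) ?_
    rw [← hβ₀, hpβ β₀] at hs₀ ⊢
    exact le_abs_intCast_mul (apply_nonneg p _) hs₀
  intro β
  rw [hpβ β, hs_eq]

/-- If a seminorm on `ℝ²` is integer-valued on `ℤ²` and vanishes exactly on the line
spanned by a primitive lattice element `α`, and `s` is the minimal nonzero value on the
lattice, then `‖β‖ = |β · α| ⬝ s` for every lattice element `β`. -/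
theorem stmt_3 (p : Seminorm ℝ (ℝ × ℝ)) (α : ℤ × ℤ) (hα : Primitive α)
    (hker : ∀ v : ℝ × ℝ, p v = 0 ↔ ∃ t : ℝ, v = t • latticeEmb α)
    (hint : ∀ β : ℤ × ℤ, ∃ m : ℤ, p (latticeEmb β) = m)
    (s : ℝ) (hs : IsLeast {x : ℝ | ∃ β : ℤ × ℤ, p (latticeEmb β) = x ∧ x ≠ 0} s) :
    ∀ β : ℤ × ℤ, p (latticeEmb β) = (|sympl β α| : ℝ) * s :=
  stmt_3_general p α hα hker s hs
end

section
/- Let ‖·‖ be a norm on ℝ² given as a finite sum ‖v‖ = Σᵢ |Φᵢ(v)| of absolute values of nonzero linear functionals Φᵢ : ℝ² → ℝ. Then any ball B = {v : ‖v‖ ≤ s} with s > 0 is a compact, convex, balanced (B = -B) set, and every extreme point (vertex) of B lies on the kernel line of some Φᵢ. -/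
/-!
`v ↦ ∑ i, |Φ i v|` is a seminorm, so its balls are convex and symmetric, and they are compact
because `v ↦ (Φ i v)ᵢ` is injective. If `Φ i v ≠ 0` for every `i`, the signs of the `Φ i` are
constant near `v`, so there the seminorm agrees with the linear functional
`L = ∑ i, sign (Φ i v) • Φ i`. In dimension two `L` kills some `w ≠ 0`, the seminorm is then
constant on `v + t • w` for small `t`, and `v` is the midpoint of two points of the ball.
-/

open Filter Topology

section SumAbs

variable {ι E : Type*} [Fintype ι] [AddCommGroup E] [Module ℝ E]

noncomputable def sumAbsSeminorm (Φ : ι → E →ₗ[ℝ] ℝ) : Seminorm ℝ E :=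
  ∑ i, (normSeminorm ℝ ℝ).comp (Φ i)

theorem sumAbsSeminorm_apply (Φ : ι → E →ₗ[ℝ] ℝ) (v : E) :
    sumAbsSeminorm Φ v = ∑ i, |Φ i v| := by
  change FunLike.coeAddMonoidHom _ _ _ (∑ i, (normSeminorm ℝ ℝ).comp (Φ i)) v = _
  simp [map_sum, Finset.sum_apply]

theorem setOf_sum_abs_le_eq_closedBall (Φ : ι → E →ₗ[ℝ] ℝ) (s : ℝ) :
    {v : E | ∑ i, |Φ i v| ≤ s} = (sumAbsSeminorm Φ).closedBall 0 s := by
  ext v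
  simp [Seminorm.mem_closedBall, sumAbsSeminorm_apply]

end SumAbs

theorem isCompact_setOf_sum_abs_le (ι : Type*) [Fintype ι] (s : ℝ) :
    IsCompact {w : ι → ℝ | ∑ i, |w i| ≤ s} := by
  refine Metric.isCompact_of_isClosed_isBounded
    (isClosed_le (continuous_finsetSum _ fun i _ => (continuous_apply i).abs) continuous_const)
    ((Metric.isBounded_closedBall (x := 0) (r := s)).subset fun w hw => ?_)
  have hs : 0 ≤ s := (Finset.sum_nonneg fun i _ => abs_nonneg (w i)).trans hw
  rw [mem_closedBall_zero_iff, pi_norm_le_iff_of_nonneg hs]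
  exact fun i => (Finset.single_le_sum (fun j _ => abs_nonneg (w j)) (Finset.mem_univ i)).trans hw

theorem isCompact_setOf_sum_abs_apply_le {ι E : Type*} [Fintype ι] [AddCommGroup E] [Module ℝ E]
    [TopologicalSpace E] [IsTopologicalAddGroup E] [ContinuousSMul ℝ E] [T2Space E]
    [FiniteDimensional ℝ E] (Φ : ι → E →ₗ[ℝ] ℝ) (hΦ : ∀ v, ∑ i, |Φ i v| = 0 → v = 0) (s : ℝ) :
    IsCompact {v : E | ∑ i, |Φ i v| ≤ s} := by
  have hker : LinearMap.ker (LinearMap.pi Φ) = ⊥ :=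
    LinearMap.ker_eq_bot'.2 fun v hv =>
      hΦ v (Finset.sum_eq_zero fun i _ => by simpa using congrFun hv i)
  exact (LinearMap.isClosedEmbedding_of_injective hker).isCompact_preimage
    (isCompact_setOf_sum_abs_le ι s)

theorem eq_zero_of_mem_extremePoints_of_add_mem_of_sub_mem {𝕜 E : Type*} [Field 𝕜]
    [LinearOrder 𝕜] [IsStrictOrderedRing 𝕜] [AddCommGroup E] [Module 𝕜 E] {A : Set E} {v u : E}
    (hv : v ∈ A.extremePoints 𝕜) (hadd : v + u ∈ A) (hsub : v - u ∈ A) : u = 0 := by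
  have hmid : v ∈ openSegment 𝕜 (v + u) (v - u) :=
    ⟨1 / 2, 1 / 2, by norm_num, by norm_num, by norm_num, by module⟩
  simpa using hv.2 hadd hsub hmid

section ExtremePoints

variable {ι E : Type*} [Fintype ι] [AddCommGroup E] [Module ℝ E]

theorem eventually_sum_abs_add_smul_eq (Φ : ι → E →ₗ[ℝ] ℝ) {v w : E} (hv : ∀ i, Φ i v ≠ 0)
    (hw : ∑ i, (SignType.sign (Φ i v) : ℝ) * Φ i w = 0) :
    ∀ᶠ t in 𝓝 (0 : ℝ), ∑ i, |Φ i (v + t • w)| = ∑ i, |Φ i v| := by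
  have hsign : ∀ i, ∀ᶠ t in 𝓝 (0 : ℝ),
      SignType.sign (Φ i (v + t • w)) = SignType.sign (Φ i v) := by
    intro i
    have hline : Continuous fun t : ℝ => Φ i (v + t • w) := by
      simp only [map_add, map_smul, smul_eq_mul]
      fun_prop
    have hcont := (continuousAt_sign_of_ne_zero (hv i)).comp_of_eq
      (hline.continuousAt (x := 0)) (by simp)
    filter_upwards [hcont.eventually_mem
      ((isOpen_discrete {SignType.sign (Φ i v)}).mem_nhds (by simp))] with t ht
    simpa using ht
  filter_upwards [Filter.eventually_all.2 hsign] with t ht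
  calc ∑ i, |Φ i (v + t • w)| = ∑ i, (SignType.sign (Φ i v) : ℝ) * Φ i (v + t • w) := by
        simp_rw [← ht, sign_mul_self]
    _ = ∑ i, (SignType.sign (Φ i v) : ℝ) * Φ i v
          + t * ∑ i, (SignType.sign (Φ i v) : ℝ) * Φ i w := by
        simp only [map_add, map_smul, smul_eq_mul, mul_add, Finset.sum_add_distrib,
          Finset.mul_sum]
        congr 1
        exact Finset.sum_congr rfl fun i _ => by ring
    _ = ∑ i, |Φ i v| := by simp [hw]

theorem exists_apply_eq_zero_of_mem_extremePoints [FiniteDimensional ℝ E]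
    (hE : 1 < Module.finrank ℝ E) (Φ : ι → E →ₗ[ℝ] ℝ) {s : ℝ} {v : E}
    (hv : v ∈ Set.extremePoints ℝ {v : E | ∑ i, |Φ i v| ≤ s}) : ∃ i, Φ i v = 0 := by
  by_contra! hΦv
  let L : E →ₗ[ℝ] ℝ := ∑ i, (SignType.sign (Φ i v) : ℝ) • Φ i
  obtain ⟨w, hwL, hw0⟩ := (Submodule.ne_bot_iff _).1
    (LinearMap.ker_ne_bot_of_finrank_lt (f := L) (by simpa using hE))
  have hLw : ∑ i, (SignType.sign (Φ i v) : ℝ) * Φ i w = 0 := by simpa [L] using hwL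
  obtain ⟨ε, hε, hball⟩ :=
    Metric.eventually_nhds_iff.1 (eventually_sum_abs_add_smul_eq Φ hΦv hLw)
  have hmem : ∀ t : ℝ, |t| < ε → v + t • w ∈ {v : E | ∑ i, |Φ i v| ≤ s} := fun t ht =>
    (hball (by simpa using ht)).le.trans hv.1
  have ht : |ε / 2| < ε := by rw [abs_of_pos (half_pos hε)]; linarith
  have htw : (ε / 2) • w = 0 := eq_zero_of_mem_extremePoints_of_add_mem_of_sub_mem hv
    (hmem _ ht) (by simpa [sub_eq_add_neg] using hmem (-(ε / 2)) (by rwa [abs_neg]))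
  exact hw0 ((smul_eq_zero.1 htw).resolve_left (half_pos hε).ne')

end ExtremePoints

theorem stmt_4_general {n : ℕ} (Φ : Fin n → (ℝ × ℝ) →ₗ[ℝ] ℝ)
    (hnorm : ∀ v : ℝ × ℝ, (∑ i, |Φ i v|) = 0 → v = 0)
    (s : ℝ) :
    IsCompact {v : ℝ × ℝ | ∑ i, |Φ i v| ≤ s} ∧
    Convex ℝ {v : ℝ × ℝ | ∑ i, |Φ i v| ≤ s} ∧
    {v : ℝ × ℝ | ∑ i, |Φ i v| ≤ s} = -{v : ℝ × ℝ | ∑ i, |Φ i v| ≤ s} ∧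
    ∀ v ∈ Set.extremePoints ℝ {v : ℝ × ℝ | ∑ i, |Φ i v| ≤ s}, ∃ i, Φ i v = 0 := by
  have hball := setOf_sum_abs_le_eq_closedBall Φ s
  refine ⟨isCompact_setOf_sum_abs_apply_le Φ hnorm s, ?_, ?_,
    fun v hv => exists_apply_eq_zero_of_mem_extremePoints (by simp) Φ hv⟩
  · rw [hball]
    exact (sumAbsSeminorm Φ).convex_closedBall 0 s
  · rw [hball, Seminorm.neg_closedBall, neg_zero]

/-- Let `‖v‖ = ∑ i, |Φᵢ v|` be a norm on `ℝ²`, where the `Φᵢ` are nonzero linear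
functionals. Then every ball `B = {v : ‖v‖ ≤ s}` with `s > 0` is compact, convex and
balanced (`B = -B`), and every extreme point of `B` lies on the kernel line of some `Φᵢ`. -/
theorem stmt_4 {n : ℕ} (Φ : Fin n → (ℝ × ℝ) →ₗ[ℝ] ℝ) (hΦ : ∀ i, Φ i ≠ 0)
    (hnorm : ∀ v : ℝ × ℝ, (∑ i, |Φ i v|) = 0 → v = 0)
    (s : ℝ) (hs : 0 < s) :
    IsCompact {v : ℝ × ℝ | ∑ i, |Φ i v| ≤ s} ∧
    Convex ℝ {v : ℝ × ℝ | ∑ i, |Φ i v| ≤ s} ∧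
    {v : ℝ × ℝ | ∑ i, |Φ i v| ≤ s} = -{v : ℝ × ℝ | ∑ i, |Φ i v| ≤ s} ∧
    ∀ v ∈ Set.extremePoints ℝ {v : ℝ × ℝ | ∑ i, |Φ i v| ≤ s}, ∃ i, Φ i v = 0 :=
  stmt_4_general Φ hnorm s
end

section
/- Let Γ be a finitely generated group, ρ : Γ → PSL₂(ℂ) a homomorphism whose image is an irreducible subgroup, and suppose h ∈ Γ generates a normal cyclic subgroup of Γ. If ρ(h) ≠ ±I, then ρ(h) is diagonalizable (not parabolic), and there is a subgroup Γ₀ ≤ Γ of index at most 2 such that ρ(Γ₀) is abelian. -/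
open Matrix

/-- `SL₂(ℂ)`. -/
abbrev SL2C := Matrix.SpecialLinearGroup (Fin 2) ℂ

/-- `PSL₂(ℂ) = SL₂(ℂ)/{±I}`, the quotient of `SL₂(ℂ)` by its center. -/
abbrev PSL2C := SL2C ⧸ Subgroup.center SL2C

/-- The class in `PSL₂(ℂ)` of the diagonal matrix `diag(z, z⁻¹)`. -/
def diagClass (z : ℂˣ) : PSL2C :=
  QuotientGroup.mk ⟨!![(z : ℂ), 0; 0, ((z⁻¹ : ℂˣ) : ℂ)], by
    simp [Matrix.det_fin_two_of]⟩

/-- The class in `PSL₂(ℂ)` of the antidiagonal matrix `[[0, w], [-w⁻¹, 0]]`. -/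
def antidiagClass (w : ℂˣ) : PSL2C :=
  QuotientGroup.mk ⟨!![0, (w : ℂ); -((w⁻¹ : ℂˣ) : ℂ), 0], by
    simp [Matrix.det_fin_two_of]⟩

/-- The class in `PSL₂(ℂ)` of the upper triangular matrix `[[a, b], [0, a⁻¹]]`. -/
def upperClass (a : ℂˣ) (b : ℂ) : PSL2C :=
  QuotientGroup.mk ⟨!![(a : ℂ), b; 0, ((a⁻¹ : ℂˣ) : ℂ)], by
    simp [Matrix.det_fin_two_of]⟩

/-- A nontrivial element of `PSL₂(ℂ)` is parabolic if it is the class of a matrix of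
trace `±2` (equivalently, of a representative of trace `2`). -/
def IsParabolic (x : PSL2C) : Prop :=
  x ≠ 1 ∧ ∃ A : SL2C, (QuotientGroup.mk A : PSL2C) = x ∧
    Matrix.trace (A : Matrix (Fin 2) (Fin 2) ℂ) = 2

/-!
Conjugating `ρ(h)` into upper triangular form, it is either `±[[1, u], [0, 1]]` with `u ≠ 0`
(the parabolic case) or `diag(z, z⁻¹)` with `z² ≠ 1`. Since `⟨h⟩` is normal, every `ρ(γ)`
conjugates `ρ(h)` into its own cyclic group. In the parabolic case the only matrices conjugating
`[[1, u], [0, 1]]` into `±[[1, v], [0, 1]]` are upper triangular, so the image of `ρ` would be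
reducible. In the diagonal case the matrices conjugating `diag(z, z⁻¹)` into the diagonal group are
diagonal or antidiagonal, so the image of `ρ` consists of diagonal and antidiagonal classes. The
product of two antidiagonal classes is diagonal, so the preimage of the (abelian) diagonal classes
has index at most 2.
-/

theorem Subgroup.index_eq_one_or_two_of_mul_mem {G : Type*} [Group G] {H : Subgroup G}
    (h : ∀ a b, a ∉ H → b ∉ H → a * b ∈ H) : H.index = 1 ∨ H.index = 2 := by
  have hdvd : H.index ∣ 2 := by
    rw [Subgroup.index_dvd_two_iff]
    by_cases hH : ∃ a, a ∉ H
    · obtain ⟨a, ha⟩ := hH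
      exact ⟨a, fun b => or_iff_not_imp_right.mpr fun hb => h b a hb ha⟩
    · push Not at hH
      exact ⟨1, fun b => Or.inr (hH b)⟩
  exact (Nat.dvd_prime Nat.prime_two).mp hdvd

theorem MonoidHom.conj_mem_zpowers_of_normal {G H : Type*} [Group G] [Group H] (f : G →* H)
    {h : G} (hnorm : (Subgroup.zpowers h).Normal) (g : G) :
    f g * f h * (f g)⁻¹ ∈ Subgroup.zpowers (f h) := by
  rw [← f.map_zpowers, ← map_inv, ← map_mul, ← map_mul]
  exact Subgroup.mem_map_of_mem f (hnorm.conj_mem h (Subgroup.mem_zpowers h) g)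

namespace SL2C

theorem mem_center_iff {A : SL2C} : A ∈ Subgroup.center SL2C ↔ A = 1 ∨ A = -1 := by
  rw [Matrix.SpecialLinearGroup.mem_center_iff, Fintype.card_fin]
  constructor
  · rintro ⟨r, hr, hA⟩
    rcases mul_self_eq_one_iff.mp (pow_two r ▸ hr) with rfl | rfl
    · left; ext : 1; simp [← hA]
    · right; ext : 1; simp [← hA, ← Matrix.diagonal_neg]
  · rintro (rfl | rfl)
    · exact ⟨1, by simp⟩
    · exact ⟨-1, by norm_num, by ext : 1; simp [← Matrix.diagonal_neg]⟩

theorem mk_eq_mk_iff {A B : SL2C} :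
    (QuotientGroup.mk A : PSL2C) = QuotientGroup.mk B ↔ A = B ∨ A = -B := by
  rw [QuotientGroup.eq, mem_center_iff, inv_mul_eq_one, inv_mul_eq_iff_eq_mul, mul_neg_one]
  exact or_congr Iff.rfl (eq_comm.trans neg_eq_iff_eq_neg)

theorem trace_conj (C A : SL2C) :
    trace ((C * A * C⁻¹ : SL2C) : Matrix (Fin 2) (Fin 2) ℂ) =
      trace (A : Matrix (Fin 2) (Fin 2) ℂ) := by
  rw [Matrix.SpecialLinearGroup.coe_mul, Matrix.SpecialLinearGroup.coe_mul, trace_mul_cycle,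
    ← Matrix.SpecialLinearGroup.coe_mul, inv_mul_cancel, Matrix.SpecialLinearGroup.coe_one,
    one_mul]

theorem ext_fin_two {A B : SL2C} (h00 : A 0 0 = B 0 0) (h01 : A 0 1 = B 0 1)
    (h10 : A 1 0 = B 1 0) (h11 : A 1 1 = B 1 1) : A = B := by
  ext i j
  fin_cases i <;> fin_cases j <;> assumption

theorem mul_apply (A B : SL2C) (i j : Fin 2) :
    (A * B) i j = A i 0 * B 0 j + A i 1 * B 1 j := by
  rw [Matrix.SpecialLinearGroup.coe_mul, Matrix.mul_apply, Fin.sum_univ_two]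

def upperSL (a : ℂˣ) (b : ℂ) : SL2C :=
  ⟨!![(a : ℂ), b; 0, ((a⁻¹ : ℂˣ) : ℂ)], by simp [det_fin_two_of]⟩

def antidiagSL (w : ℂˣ) : SL2C :=
  ⟨!![0, (w : ℂ); -((w⁻¹ : ℂˣ) : ℂ), 0], by simp [det_fin_two_of]⟩

@[simp]
theorem coe_upperSL (a : ℂˣ) (b : ℂ) :
    (upperSL a b : Matrix (Fin 2) (Fin 2) ℂ) = !![(a : ℂ), b; 0, ((a⁻¹ : ℂˣ) : ℂ)] := rfl

@[simp]
theorem coe_antidiagSL (w : ℂˣ) :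
    (antidiagSL w : Matrix (Fin 2) (Fin 2) ℂ) = !![0, (w : ℂ); -((w⁻¹ : ℂˣ) : ℂ), 0] := rfl

theorem neg_upperSL (a : ℂˣ) (b : ℂ) : -upperSL a b = upperSL (-a) (-b) := by
  ext i j
  fin_cases i <;> fin_cases j <;> simp

def diagSL : ℂˣ →* SL2C where
  toFun z := upperSL z 0
  map_one' := by ext i j; fin_cases i <;> fin_cases j <;> simp
  map_mul' z w := by apply ext_fin_two <;> simp [mul_apply, mul_comm]

theorem diagSL_apply (z : ℂˣ) : diagSL z = upperSL z 0 := rfl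

def unipSL : Multiplicative ℂ →* SL2C where
  toFun u := upperSL 1 u.toAdd
  map_one' := by ext i j; fin_cases i <;> fin_cases j <;> simp
  map_mul' u v := by apply ext_fin_two <;> simp [mul_apply, add_comm]

theorem eq_upperSL_of_lower_left_eq_zero {B : SL2C} (hB : B 1 0 = 0) :
    ∃ a b, B = upperSL a b := by
  obtain ⟨a, b, ha, rfl⟩ :=
    Matrix.SpecialLinearGroup.fin_two_exists_eq_mk_of_apply_zero_one_eq_zero B hB
  exact ⟨Units.mk0 a ha, b, by ext i j; fin_cases i <;> fin_cases j <;> simp⟩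

theorem lower_left_eq_zero_of_mul_unip {B : SL2C} {u v : ℂ} (hu : u ≠ 0)
    (h : B * upperSL 1 u = upperSL 1 v * B ∨ B * upperSL 1 u = -(upperSL 1 v * B)) :
    B 1 0 = 0 := by
  rcases h with h | h
  · simpa [mul_apply, hu] using congr($h 1 1)
  · have h10 := congr($h 1 0)
    simp only [Matrix.SpecialLinearGroup.coe_neg, Matrix.neg_apply, mul_apply, coe_upperSL,
      Units.val_one, inv_one, of_apply, cons_val', cons_val_zero, cons_val_one, cons_val_fin_one,
      mul_one, mul_zero, add_zero, zero_mul, one_mul, zero_add] at h10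
    linear_combination h10 / 2

theorem inv_sub_self_ne_zero {z : ℂˣ} (hz : z ^ 2 ≠ 1) : (z : ℂ)⁻¹ - z ≠ 0 := by
  refine sub_ne_zero.mpr fun h => hz (Units.ext ?_)
  rw [Units.val_pow_eq_pow_val, sq]
  nth_rw 1 [← h]
  simp

theorem diag_or_antidiag_of_mul_diag {B : SL2C} {z w : ℂˣ} (hz : z ^ 2 ≠ 1)
    (h : B * upperSL z 0 = upperSL w 0 * B) :
    (B 0 1 = 0 ∧ B 1 0 = 0) ∨ (B 0 0 = 0 ∧ B 1 1 = 0) := by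
  have h00 := congr($h 0 0)
  have h01 := congr($h 0 1)
  have h10 := congr($h 1 0)
  have h11 := congr($h 1 1)
  simp only [mul_apply, coe_upperSL, Units.val_inv_eq_inv_val, of_apply, cons_val', cons_val_zero,
    cons_val_one, cons_val_fin_one, mul_zero, add_zero, zero_mul, zero_add] at h00 h01 h10 h11
  have hz' := inv_sub_self_ne_zero hz
  by_cases hzw : z = w
  · subst hzw
    refine Or.inl ⟨?_, ?_⟩
    · have : B 0 1 * ((z : ℂ)⁻¹ - z) = 0 := by linear_combination h01
      exact (mul_eq_zero.mp this).resolve_right hz'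
    · have : B 1 0 * ((z : ℂ)⁻¹ - z) = 0 := by linear_combination -h10
      exact (mul_eq_zero.mp this).resolve_right hz'
  · have hzw' : (z : ℂ) - w ≠ 0 := sub_ne_zero.mpr fun h => hzw (Units.ext h)
    have hzw'' : (z : ℂ)⁻¹ - (w : ℂ)⁻¹ ≠ 0 :=
      sub_ne_zero.mpr fun h => hzw (Units.ext (inv_injective h))
    refine Or.inr ⟨?_, ?_⟩
    · have : B 0 0 * ((z : ℂ) - w) = 0 := by linear_combination h00
      exact (mul_eq_zero.mp this).resolve_right hzw'
    · have : B 1 1 * ((z : ℂ)⁻¹ - (w : ℂ)⁻¹) = 0 := by linear_combination h11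
      exact (mul_eq_zero.mp this).resolve_right hzw''

theorem exists_conj_eq_upperSL (A : SL2C) : ∃ C a b, C * A * C⁻¹ = upperSL a b := by
  suffices ∃ C : SL2C, (C * A * C⁻¹) 1 0 = 0 by
    obtain ⟨C, hC⟩ := this
    exact ⟨C, eq_upperSL_of_lower_left_eq_zero hC⟩
  by_cases hc : A 1 0 = 0
  · exact ⟨1, by simpa⟩
  obtain ⟨s, hs⟩ :=
    IsAlgClosed.exists_pow_nat_eq (trace (A : Matrix (Fin 2) (Fin 2) ℂ) ^ 2 - 4) two_pos
  set μ := (trace (A : Matrix (Fin 2) (Fin 2) ℂ) + s) / 2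
  have hμ : μ ^ 2 - trace (A : Matrix (Fin 2) (Fin 2) ℂ) * μ + 1 = 0 := by
    linear_combination hs / 4
  -- the second row `(A 1 0, μ - A 0 0)` of `C` is a left eigenvector of `A` for the eigenvalue `μ`
  obtain ⟨C, hC⟩ : ∃ C : SL2C,
      (C : Matrix (Fin 2) (Fin 2) ℂ) = !![0, -(A 1 0)⁻¹; A 1 0, μ - A 0 0] :=
    ⟨⟨_, by simp [det_fin_two_of, hc]⟩, rfl⟩
  refine ⟨C, ?_⟩
  have hdet : A 0 0 * A 1 1 - A 0 1 * A 1 0 = 1 := by rw [← det_fin_two, A.2]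
  rw [trace_fin_two] at hμ
  simp only [mul_apply, hC, Matrix.SpecialLinearGroup.coe_inv, adjugate_fin_two, of_apply,
    cons_val', cons_val_zero, cons_val_one, cons_val_fin_one, neg_neg, mul_neg]
  linear_combination A 1 0 * hμ + A 1 0 * hdet

theorem exists_conj_eq_unip {A : SL2C} (hA : A ≠ 1)
    (htr : trace (A : Matrix (Fin 2) (Fin 2) ℂ) = 2) :
    ∃ C u, u ≠ 0 ∧ C * A * C⁻¹ = upperSL 1 u := by
  obtain ⟨C, a, b, hCA⟩ := exists_conj_eq_upperSL A
  have htr' : (a : ℂ) + (a : ℂ)⁻¹ = 2 := by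
    rw [← trace_conj C A, hCA] at htr
    simpa [trace_fin_two] using htr
  obtain rfl : a = 1 := by
    have : ((a : ℂ) - 1) ^ 2 = 0 := by
      field_simp at htr'
      linear_combination htr'
    exact Units.ext (sub_eq_zero.mp (pow_eq_zero_iff two_ne_zero |>.mp this))
  refine ⟨C, b, fun hb => hA ?_, hCA⟩
  rwa [hb, show upperSL 1 0 = 1 from unipSL.map_one, mul_inv_eq_one, mul_eq_left] at hCA

theorem exists_conj_eq_diag {A : SL2C} (h2 : trace (A : Matrix (Fin 2) (Fin 2) ℂ) ≠ 2)
    (hm2 : trace (A : Matrix (Fin 2) (Fin 2) ℂ) ≠ -2) :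
    ∃ C z, z ^ 2 ≠ 1 ∧ C * A * C⁻¹ = upperSL z 0 := by
  obtain ⟨C, a, b, hCA⟩ := exists_conj_eq_upperSL A
  have htr : trace (A : Matrix (Fin 2) (Fin 2) ℂ) = a + (a : ℂ)⁻¹ := by
    rw [← trace_conj C A, hCA]
    simp [trace_fin_two]
  have ha : a ^ 2 ≠ 1 := by
    intro h
    have : (a : ℂ) * a = 1 := by simpa [sq] using congr_arg Units.val h
    rcases mul_self_eq_one_iff.mp this with h1 | h1
    · exact h2 (by rw [htr, h1]; norm_num)
    · exact hm2 (by rw [htr, h1]; norm_num)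
  obtain ⟨s, hs⟩ : ∃ s : ℂ, s * ((a : ℂ)⁻¹ - a) = -b :=
    ⟨-b / ((a : ℂ)⁻¹ - a), div_mul_cancel₀ _ (inv_sub_self_ne_zero ha)⟩
  have hU : upperSL 1 s * upperSL a b = upperSL a 0 * upperSL 1 s := by
    apply ext_fin_two <;> simp [mul_apply]
    linear_combination hs
  refine ⟨upperSL 1 s * C, a, ha, ?_⟩
  calc upperSL 1 s * C * A * (upperSL 1 s * C)⁻¹
      = upperSL 1 s * (C * A * C⁻¹) * (upperSL 1 s)⁻¹ := by group
    _ = upperSL a 0 := by rw [hCA, hU, mul_inv_cancel_right]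

end SL2C

namespace PSL2C

open SL2C

def diagonalSubgroup : Subgroup PSL2C := ((QuotientGroup.mk' _).comp diagSL).range

def unipotentSubgroup : Subgroup PSL2C := ((QuotientGroup.mk' _).comp unipSL).range

theorem diagClass_eq_mk (z : ℂˣ) : diagClass z = QuotientGroup.mk (upperSL z 0) := rfl

theorem diagClass_mem_diagonalSubgroup (z : ℂˣ) : diagClass z ∈ diagonalSubgroup := ⟨z, rfl⟩

theorem mk_upperSL_one_mem_unipotentSubgroup (u : ℂ) :
    (QuotientGroup.mk (upperSL 1 u) : PSL2C) ∈ unipotentSubgroup :=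
  ⟨Multiplicative.ofAdd u, rfl⟩

theorem diagonalSubgroup_commute {x y : PSL2C} (hx : x ∈ diagonalSubgroup)
    (hy : y ∈ diagonalSubgroup) : x * y = y * x := by
  obtain ⟨z, rfl⟩ := hx
  obtain ⟨w, rfl⟩ := hy
  rw [← map_mul, mul_comm, map_mul]

theorem antidiagClass_mul_antidiagClass_mem (v w : ℂˣ) :
    antidiagClass v * antidiagClass w ∈ diagonalSubgroup := by
  refine ⟨-(v * w⁻¹), ?_⟩
  show QuotientGroup.mk (upperSL _ 0) = QuotientGroup.mk (antidiagSL v * antidiagSL w)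
  congr 1
  apply ext_fin_two <;> simp [mul_apply, mul_comm]

theorem mk_mem_range_upperClass {B : SL2C} (hB : B 1 0 = 0) :
    (QuotientGroup.mk B : PSL2C) ∈ Set.range fun p : ℂˣ × ℂ => upperClass p.1 p.2 := by
  obtain ⟨a, b, rfl⟩ := eq_upperSL_of_lower_left_eq_zero hB
  exact ⟨(a, b), rfl⟩

theorem mk_mem_diagonalSubgroup {B : SL2C} (hB : B 0 1 = 0 ∧ B 1 0 = 0) :
    (QuotientGroup.mk B : PSL2C) ∈ diagonalSubgroup := by
  obtain ⟨a, b, rfl⟩ := eq_upperSL_of_lower_left_eq_zero hB.2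
  obtain rfl : b = 0 := hB.1
  exact ⟨a, rfl⟩

theorem mk_mem_range_antidiagClass {B : SL2C} (hB : B 0 0 = 0 ∧ B 1 1 = 0) :
    (QuotientGroup.mk B : PSL2C) ∈ Set.range antidiagClass := by
  have hdet : B 0 1 * -B 1 0 = 1 := by
    have := B.2
    rw [det_fin_two, hB.1, hB.2] at this
    linear_combination this
  refine ⟨Units.mk (B 0 1) (-B 1 0) hdet (by rw [mul_comm, hdet]), ?_⟩
  show QuotientGroup.mk (antidiagSL _) = _
  congr 1
  apply ext_fin_two <;> simp [hB]

theorem mem_range_upperClass_of_conj_mem_unipotentSubgroup {u : ℂ} (hu : u ≠ 0) {x : PSL2C}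
    (hx : x * QuotientGroup.mk (upperSL 1 u) * x⁻¹ ∈ unipotentSubgroup) :
    x ∈ Set.range fun p : ℂˣ × ℂ => upperClass p.1 p.2 := by
  obtain ⟨B, rfl⟩ := QuotientGroup.mk_surjective x
  obtain ⟨v, hv⟩ := hx
  have hBv := eq_mul_inv_iff_mul_eq.mp hv
  rw [MonoidHom.comp_apply, QuotientGroup.mk'_apply, ← QuotientGroup.mk_mul,
    ← QuotientGroup.mk_mul] at hBv
  exact mk_mem_range_upperClass (lower_left_eq_zero_of_mul_unip hu (mk_eq_mk_iff.mp hBv.symm))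

theorem mem_diagonalSubgroup_or_antidiag_of_conj_mem {z : ℂˣ} (hz : z ^ 2 ≠ 1) {x : PSL2C}
    (hx : x * diagClass z * x⁻¹ ∈ diagonalSubgroup) :
    x ∈ diagonalSubgroup ∨ x ∈ Set.range antidiagClass := by
  obtain ⟨B, rfl⟩ := QuotientGroup.mk_surjective x
  obtain ⟨w, hw⟩ := hx
  have hBw := eq_mul_inv_iff_mul_eq.mp hw
  rw [MonoidHom.comp_apply, QuotientGroup.mk'_apply, diagSL_apply, diagClass_eq_mk,
    ← QuotientGroup.mk_mul, ← QuotientGroup.mk_mul] at hBw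
  obtain ⟨w', hw'⟩ : ∃ w' : ℂˣ, B * upperSL z 0 = upperSL w' 0 * B := by
    rcases mk_eq_mk_iff.mp hBw.symm with h | h
    · exact ⟨w, h⟩
    · exact ⟨-w, by rw [h, ← neg_mul, neg_upperSL, neg_zero]⟩
  exact (diag_or_antidiag_of_mul_diag hz hw').imp mk_mem_diagonalSubgroup
    mk_mem_range_antidiagClass

theorem exists_conj_eq_diagClass {x : PSL2C} (hx1 : x ≠ 1) (hx : ¬ IsParabolic x) :
    ∃ g : PSL2C, ∃ z : ℂˣ, z ^ 2 ≠ 1 ∧ g * x * g⁻¹ = diagClass z := by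
  obtain ⟨A, rfl⟩ := QuotientGroup.mk_surjective x
  have h2 : trace (A : Matrix (Fin 2) (Fin 2) ℂ) ≠ 2 := fun h => hx ⟨hx1, A, rfl, h⟩
  have hm2 : trace (A : Matrix (Fin 2) (Fin 2) ℂ) ≠ -2 := fun h =>
    hx ⟨hx1, -A, mk_eq_mk_iff.mpr (Or.inr rfl), by simp [h]⟩
  obtain ⟨C, z, hz, hCA⟩ := exists_conj_eq_diag h2 hm2
  exact ⟨C, z, hz, by rw [diagClass_eq_mk, ← hCA]; rfl⟩

end PSL2C

theorem IsParabolic.exists_conj_eq_unip {x : PSL2C} (hx : IsParabolic x) :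
    ∃ g : PSL2C, ∃ u, u ≠ 0 ∧ g * x * g⁻¹ = QuotientGroup.mk (SL2C.upperSL 1 u) := by
  obtain ⟨hx1, A, rfl, htr⟩ := hx
  obtain ⟨C, u, hu, hCA⟩ := SL2C.exists_conj_eq_unip (fun h => hx1 (by rw [h]; rfl)) htr
  exact ⟨C, u, hu, by rw [← hCA]; rfl⟩

theorem stmt_16_general {Γ : Type*} [Group Γ] (ρ : Γ →* PSL2C)
    (hirr : ¬ ∃ g : PSL2C, ∀ γ : Γ,
      g * ρ γ * g⁻¹ ∈ Set.range fun p : ℂˣ × ℂ => upperClass p.1 p.2)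
    (h : Γ) (hnorm : (Subgroup.zpowers h).Normal)
    (hρh : ρ h ≠ 1) :
    (¬ IsParabolic (ρ h)) ∧
    (∃ g : PSL2C, g * ρ h * g⁻¹ ∈ Set.range diagClass) ∧
    ∃ Γ₀ : Subgroup Γ, (Γ₀.index = 1 ∨ Γ₀.index = 2) ∧
      ∀ a ∈ Γ₀, ∀ b ∈ Γ₀, ρ a * ρ b = ρ b * ρ a := by
  have hpar : ¬ IsParabolic (ρ h) := by
    intro hpar
    obtain ⟨g, u, hu, hg⟩ := hpar.exists_conj_eq_unip
    refine hirr ⟨g, fun γ => PSL2C.mem_range_upperClass_of_conj_mem_unipotentSubgroup hu ?_⟩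
    have := ((MulAut.conj g).toMonoidHom.comp ρ).conj_mem_zpowers_of_normal hnorm γ
    rw [show ((MulAut.conj g).toMonoidHom.comp ρ) h = _ from hg] at this
    exact Subgroup.zpowers_le.mpr (PSL2C.mk_upperSL_one_mem_unipotentSubgroup u) this
  obtain ⟨g, z, hz, hg⟩ := PSL2C.exists_conj_eq_diagClass hρh hpar
  set f : Γ →* PSL2C := (MulAut.conj g).toMonoidHom.comp ρ
  have hdich (γ : Γ) : f γ ∈ PSL2C.diagonalSubgroup ∨ f γ ∈ Set.range antidiagClass := by
    refine PSL2C.mem_diagonalSubgroup_or_antidiag_of_conj_mem hz ?_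
    have := f.conj_mem_zpowers_of_normal hnorm γ
    rw [show f h = diagClass z from hg] at this
    exact Subgroup.zpowers_le.mpr (PSL2C.diagClass_mem_diagonalSubgroup z) this
  refine ⟨hpar, ⟨g, z, hg.symm⟩, PSL2C.diagonalSubgroup.comap f, ?_, ?_⟩
  · apply Subgroup.index_eq_one_or_two_of_mul_mem
    intro a b ha hb
    obtain ⟨v, hv⟩ := (hdich a).resolve_left ha
    obtain ⟨w, hw⟩ := (hdich b).resolve_left hb
    rw [Subgroup.mem_comap, map_mul, ← hv, ← hw]
    exact PSL2C.antidiagClass_mul_antidiagClass_mem v w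
  · intro a ha b hb
    apply (MulAut.conj g).injective
    rw [map_mul, map_mul]
    exact PSL2C.diagonalSubgroup_commute ha hb

/-- Let `Γ` be a finitely generated group, `ρ : Γ → PSL₂(ℂ)` a homomorphism with
irreducible image, and `h ∈ Γ` a generator of a normal cyclic subgroup of `Γ`. If
`ρ(h) ≠ ±I`, then `ρ(h)` is diagonalizable (not parabolic) and there is a subgroup
`Γ₀ ≤ Γ` of index at most 2 with `ρ(Γ₀)` abelian. -/
theorem stmt_16 {Γ : Type*} [Group Γ] (hfg : Group.FG Γ) (ρ : Γ →* PSL2C)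
    (hirr : ¬ ∃ g : PSL2C, ∀ γ : Γ,
      g * ρ γ * g⁻¹ ∈ Set.range fun p : ℂˣ × ℂ => upperClass p.1 p.2)
    (h : Γ) (hnorm : (Subgroup.zpowers h).Normal)
    (hρh : ρ h ≠ 1) :
    (¬ IsParabolic (ρ h)) ∧
    (∃ g : PSL2C, g * ρ h * g⁻¹ ∈ Set.range diagClass) ∧
    ∃ Γ₀ : Subgroup Γ, (Γ₀.index = 1 ∨ Γ₀.index = 2) ∧
      ∀ a ∈ Γ₀, ∀ b ∈ Γ₀, ρ a * ρ b = ρ b * ρ a :=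
  stmt_16_general ρ hirr h hnorm hρh
end
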